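/- Let σx, σy, σz be the standard 2×2 Pauli matrices and, for c = (c₁,c₂,c₃) ∈ ℝ³, let ρ(c) := (1/4)·(I₄ + c₁·σx⊗σx + c₂·σy⊗σy + c₃·σz⊗σz). Then ρ(c) is positive semidefinite if and only if c lies in the tetrahedron T ⊂ ℝ³ with vertices (−1,−1,−1), (−1,1,1), (1,−1,1), (1,1,−1); equivalently, if and only if the four inequalities 1 − c₁ − c₂ − c₃ ≥ 0, 1 − c₁ + c₂ + c₃ ≥ 0, 1 + c₁ − c₂ + c₃ ≥ 0, 1 + c₁ + c₂ − c₃ ≥ 0 hold. -/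

import Mathlib

open Matrix Kronecker
open scoped ComplexOrder

/-- The Pauli matrix `σx`. -/
def σx : Matrix (Fin 2) (Fin 2) ℂ := !![0, 1; 1, 0]

/-- The Pauli matrix `σy`. -/
def σy : Matrix (Fin 2) (Fin 2) ℂ := !![0, -Complex.I; Complex.I, 0]

/-- The Pauli matrix `σz`. -/
def σz : Matrix (Fin 2) (Fin 2) ℂ := !![1, 0; 0, -1]

/-- The maximally mixed marginal two-qubit state with correlation vector `c`:
`ρ(c) = (1/4)(I₄ + c₁ σx⊗σx + c₂ σy⊗σy + c₃ σz⊗σz)` (Kronecker product). -/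
noncomputable def ρ (c : Fin 3 → ℝ) : Matrix (Fin 2 × Fin 2) (Fin 2 × Fin 2) ℂ :=
  (1 / 4 : ℂ) • (1 + (c 0 : ℂ) • (σx ⊗ₖ σx) + (c 1 : ℂ) • (σy ⊗ₖ σy) + (c 2 : ℂ) • (σz ⊗ₖ σz))

/-!
In the Bell basis `ψ⁻, φ⁻, φ⁺, ψ⁺` the state `ρ(c)` is diagonal, and its eigenvalues are exactly
the barycentric coordinates `(1 + ⟪tₖ, c⟫) / 4` of `c` with respect to the vertices `tₖ` of `T`.
A sum of positive multiples of rank-one projections onto orthogonal vectors is positive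
semidefinite iff all the multiples are nonnegative, and a point lies in a simplex iff all its
barycentric coordinates are nonnegative.
-/

theorem posSemidef_sum_smul_vecMulVec_iff {ι n 𝕜 : Type*} [Fintype ι] [Fintype n] [RCLike 𝕜]
    {v : ι → n → 𝕜} (hv : Pairwise fun i j => star (v i) ⬝ᵥ v j = 0) (hv₀ : ∀ i, v i ≠ 0)
    (μ : ι → ℝ) :
    (∑ i, μ i • vecMulVec (v i) (star (v i))).PosSemidef ↔ ∀ i, 0 ≤ μ i := by
  refine ⟨fun h j => ?_, fun h => posSemidef_sum _ fun i _ =>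
    (posSemidef_vecMulVec_self_star (v i)).smul (h i)⟩
  have hquad : star (v j) ⬝ᵥ ((∑ i, μ i • vecMulVec (v i) (star (v i))) *ᵥ v j)
      = (μ j : 𝕜) * (star (v j) ⬝ᵥ v j) ^ 2 := by
    simp only [sum_mulVec, smul_mulVec, vecMulVec_mulVec, dotProduct_sum]
    rw [Finset.sum_eq_single j (fun i _ hij => by simp [hv hij]) (by simp)]
    simp [dotProduct_smul, RCLike.real_smul_eq_coe_mul, sq]
  have hnorm : 0 < star (v j) ⬝ᵥ v j := dotProduct_star_self_pos_iff.mpr (hv₀ j)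
  have hnonneg := h.dotProduct_mulVec_nonneg (v j)
  rw [hquad] at hnonneg
  exact RCLike.ofReal_nonneg.mp (le_of_mul_le_mul_right (by rwa [zero_mul]) (pow_pos hnorm 2))

theorem convexHull_range_eq_preimage_nonneg {ι E : Type*} [Fintype ι] [AddCommGroup E]
    [Module ℝ E] (z : ι → E) (w : E →ᵃ[ℝ] ι → ℝ) (hw_sum : ∀ x, ∑ i, w x i = 1)
    (hw_comb : ∀ x, ∑ i, w x i • z i = x) (hw_vertex : ∀ j, 0 ≤ w (z j)) :
    convexHull ℝ (Set.range z) = w ⁻¹' Set.Ici 0 := by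
  refine (convexHull_min (Set.range_subset_iff.2 hw_vertex)
    ((convex_Ici 0).affine_preimage w)).antisymm fun x hx => ?_
  rw [← hw_comb x]
  exact (convex_convexHull ℝ _).sum_mem (fun i _ => hx i) (hw_sum x)
    fun i _ => subset_convexHull ℝ _ (Set.mem_range_self i)

def tetraVertex : Fin 4 → Fin 3 → ℝ := ![![-1, -1, -1], ![-1, 1, 1], ![1, -1, 1], ![1, 1, -1]]

noncomputable def tetraWeight : (Fin 3 → ℝ) →ᵃ[ℝ] Fin 4 → ℝ :=
  AffineMap.const ℝ (Fin 3 → ℝ) (fun _ : Fin 4 => (1 / 4 : ℝ)) +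
    ((1 / 4 : ℝ) • toLin' (of tetraVertex)).toAffineMap

theorem tetraWeight_apply (c : Fin 3 → ℝ) (k : Fin 4) :
    tetraWeight c k = (1 + tetraVertex k ⬝ᵥ c) / 4 := by
  change 1 / 4 + 1 / 4 * (tetraVertex k ⬝ᵥ c) = _
  ring

theorem sum_tetraWeight (c : Fin 3 → ℝ) : ∑ k, tetraWeight c k = 1 := by
  simp only [tetraWeight_apply, Fin.sum_univ_four, tetraVertex, dotProduct, Fin.sum_univ_three,
    cons_val_zero, cons_val_one, cons_val]
  ring

theorem sum_tetraWeight_smul_tetraVertex (c : Fin 3 → ℝ) :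
    ∑ k, tetraWeight c k • tetraVertex k = c := by
  funext j
  fin_cases j <;>
    simp [tetraWeight_apply, Fin.sum_univ_four, tetraVertex, dotProduct, Fin.sum_univ_three] <;>
    ring

theorem tetraWeight_tetraVertex_nonneg (j : Fin 4) : 0 ≤ tetraWeight (tetraVertex j) := by
  fin_cases j <;>
    simp [Pi.le_def, Fin.forall_fin_succ, tetraWeight_apply, tetraVertex, dotProduct,
      Fin.sum_univ_three] <;>
    norm_num

theorem convexHull_tetrahedron :
    convexHull ℝ ({![-1, -1, -1], ![-1, 1, 1], ![1, -1, 1], ![1, 1, -1]} : Set (Fin 3 → ℝ)) =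
      tetraWeight ⁻¹' Set.Ici 0 := by
  rw [← convexHull_range_eq_preimage_nonneg tetraVertex tetraWeight sum_tetraWeight
    sum_tetraWeight_smul_tetraVertex tetraWeight_tetraVertex_nonneg]
  simp only [tetraVertex, range_cons, range_empty, Set.union_empty, Set.singleton_union]

theorem tetraWeight_nonneg_iff (c : Fin 3 → ℝ) :
    0 ≤ tetraWeight c ↔
      (1 - c 0 - c 1 - c 2 ≥ 0 ∧ 1 - c 0 + c 1 + c 2 ≥ 0 ∧
       1 + c 0 - c 1 + c 2 ≥ 0 ∧ 1 + c 0 + c 1 - c 2 ≥ 0) := by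
  simp only [Pi.le_def, Pi.zero_apply, Fin.forall_fin_succ, IsEmpty.forall_iff, and_true,
    tetraWeight_apply, tetraVertex, dotProduct, Fin.sum_univ_three, cons_val_zero, cons_val_one,
    cons_val_succ, cons_val]
  constructor <;> rintro ⟨h₀, h₁, h₂, h₃⟩ <;> refine ⟨?_, ?_, ?_, ?_⟩ <;> linarith

/-- Unnormalised `ψ⁻, φ⁻, φ⁺, ψ⁺`, as arrays of coefficients of `|ij⟩`; `bellVec k` is the
eigenvector of `ρ c` belonging to the vertex `tetraVertex k`. -/
def bellVec : Fin 4 → Fin 2 × Fin 2 → ℂ :=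
  ![fun p => !![0, 1; -1, 0] p.1 p.2, fun p => !![1, 0; 0, -1] p.1 p.2,
    fun p => !![1, 0; 0, 1] p.1 p.2, fun p => !![0, 1; 1, 0] p.1 p.2]

theorem bellVec_orthogonal : Pairwise fun i j => star (bellVec i) ⬝ᵥ bellVec j = 0 := by
  intro i j hij
  fin_cases i <;> fin_cases j <;> simp_all [bellVec, dotProduct, Fintype.sum_prod_type]

theorem bellVec_ne_zero (k : Fin 4) : bellVec k ≠ 0 := by
  fin_cases k <;> simp [bellVec, funext_iff, Prod.forall, Fin.forall_fin_two]

/-- The factor `1 / 2` compensates for `‖bellVec k‖² = 2`. -/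
theorem ρ_eq_sum_smul_vecMulVec_bellVec (c : Fin 3 → ℝ) :
    ρ c = ∑ k, (tetraWeight c k / 2) • vecMulVec (bellVec k) (star (bellVec k)) := by
  ext ⟨i, j⟩ ⟨k, l⟩
  fin_cases i <;> fin_cases j <;> fin_cases k <;> fin_cases l <;>
    simp [ρ, σx, σy, σz, bellVec, tetraWeight_apply, tetraVertex, vecMulVec, one_apply,
      Fin.sum_univ_four, dotProduct, Fin.sum_univ_three] <;>
    ring

theorem ρ_posSemidef_iff (c : Fin 3 → ℝ) : (ρ c).PosSemidef ↔ 0 ≤ tetraWeight c := by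
  rw [ρ_eq_sum_smul_vecMulVec_bellVec,
    posSemidef_sum_smul_vecMulVec_iff bellVec_orthogonal bellVec_ne_zero]
  simp only [Pi.le_def, Pi.zero_apply]
  exact forall_congr' fun k => ⟨fun h => by linarith, fun h => by linarith⟩

/-- `ρ(c)` is positive semidefinite iff `c` lies in the tetrahedron with vertices
`(−1,−1,−1), (−1,1,1), (1,−1,1), (1,1,−1)`; equivalently, iff the four inequalities
`1−c₁−c₂−c₃ ≥ 0`, `1−c₁+c₂+c₃ ≥ 0`, `1+c₁−c₂+c₃ ≥ 0`, `1+c₁+c₂−c₃ ≥ 0` hold. -/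
theorem stmt6 (c : Fin 3 → ℝ) :
    ((ρ c).PosSemidef ↔
      c ∈ convexHull ℝ
        ({![-1, -1, -1], ![-1, 1, 1], ![1, -1, 1], ![1, 1, -1]} : Set (Fin 3 → ℝ))) ∧
    ((ρ c).PosSemidef ↔
      (1 - c 0 - c 1 - c 2 ≥ 0 ∧ 1 - c 0 + c 1 + c 2 ≥ 0 ∧
       1 + c 0 - c 1 + c 2 ≥ 0 ∧ 1 + c 0 + c 1 - c 2 ≥ 0)) := by
  rw [convexHull_tetrahedron, ρ_posSemidef_iff]
  exact ⟨Iff.rfl, tetraWeight_nonneg_iff c⟩
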